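/- arXiv:1411.6935 — 10 statements merged into one kernel-verified Lean document; each statement's English description precedes it below -/
import Mathlib

section
/- Let A be a real symmetric n×n matrix. Then A has a repeated eigenvalue (its characteristic polynomial has a root of multiplicity at least 2, equivalently some eigenspace has dimension at least 2) if and only if there exists a nonzero real antisymmetric n×n matrix R such that A*R = R*A. (Lemma 1.4, Lax's criterion for degeneracy.) -/
/-!
By the spectral theorem, `A` is the image of the diagonal matrix `D` of its eigenvalues under
conjugation by an orthogonal matrix. That conjugation is a star-algebra automorphism, so it
matches nonzero antisymmetric matrices commuting with `A` to those commuting with `D`.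
A matrix commutes with `D = diag d` iff its `(i, j)` entry vanishes whenever `dᵢ ≠ dⱼ`.
If the `dᵢ` are distinct, an antisymmetric matrix commuting with `D` is therefore diagonal,
hence zero; if `dᵢ = dⱼ` with `i ≠ j`, then `Eᵢⱼ - Eⱼᵢ` commutes with `D`. Finally the `dᵢ` are
the roots of the characteristic polynomial, so they are distinct iff no root is repeated.
-/

open Matrix Polynomial Function

theorem Polynomial.not_nodup_roots_iff {R : Type*} [CommRing R] [IsDomain R] {p : R[X]} :
    ¬ p.roots.Nodup ↔ ∃ a, 2 ≤ p.rootMultiplicity a := by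
  classical
  simp only [Multiset.nodup_iff_count_le_one, count_roots, not_forall, not_le,
    Nat.lt_iff_add_one_le]

theorem StarAlgEquiv.exists_mem_skewAdjoint_commute_apply_iff {R A B : Type*} [CommSemiring R]
    [Ring A] [StarRing A] [Algebra R A] [Ring B] [StarRing B] [Algebra R B]
    (φ : A ≃⋆ₐ[R] B) (a : A) :
    (∃ r ∈ skewAdjoint B, r ≠ 0 ∧ Commute (φ a) r) ↔ ∃ r ∈ skewAdjoint A, r ≠ 0 ∧ Commute a r := by
  refine (Equiv.exists_congr (φ : A ≃ B) fun r => ?_).symm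
  simp only [EquivLike.coe_coe, skewAdjoint.mem_iff, Commute, SemiconjBy, ← map_star, ← map_neg,
    ← map_mul, EmbeddingLike.apply_eq_iff_eq, ne_eq, EmbeddingLike.map_eq_zero_iff]

namespace Matrix

variable {ι K : Type*}

theorem mem_skewAdjoint_iff_transpose [CommRing K] [StarRing K] [TrivialStar K]
    {M : Matrix ι ι K} : M ∈ skewAdjoint (Matrix ι ι K) ↔ Mᵀ = -M := by
  rw [skewAdjoint.mem_iff, star_eq_conjTranspose, conjTranspose_eq_transpose_of_trivial]

theorem commute_diagonal_iff [Fintype ι] [DecidableEq ι] [CommRing K] [NoZeroDivisors K]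
    {d : ι → K} {M : Matrix ι ι K} :
    Commute (diagonal d) M ↔ ∀ i j, d i ≠ d j → M i j = 0 := by
  have entry (i j : ι) : d i * M i j = M i j * d j ↔ (d i ≠ d j → M i j = 0) := by
    rw [mul_comm (M i j), ← sub_eq_zero, ← sub_mul, mul_eq_zero, sub_eq_zero, or_iff_not_imp_left]
  simp only [Commute, SemiconjBy, ← entry, ← Matrix.ext_iff, diagonal_mul, mul_diagonal]

theorem apply_self_eq_zero_of_transpose_eq_neg [CommRing K] [NoZeroDivisors K] [CharZero K]
    {M : Matrix ι ι K} (hM : Mᵀ = -M) (i : ι) : M i i = 0 :=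
  CharZero.eq_neg_self_iff.mp (congr_fun₂ hM i i)

theorem exists_mem_skewAdjoint_commute_diagonal_iff [Fintype ι] [DecidableEq ι] [CommRing K]
    [StarRing K] [TrivialStar K] [NoZeroDivisors K] [CharZero K] (d : ι → K) :
    (∃ R ∈ skewAdjoint (Matrix ι ι K), R ≠ 0 ∧ Commute (diagonal d) R) ↔ ¬ Injective d := by
  simp only [mem_skewAdjoint_iff_transpose, commute_diagonal_iff]
  constructor
  · rintro ⟨R, hskew, hR0, hc⟩ hd
    refine hR0 (ext fun i j => ?_)
    obtain rfl | hij := eq_or_ne i j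
    · exact apply_self_eq_zero_of_transpose_eq_neg hskew i
    · exact hc i j (hd.ne hij)
  · intro hd
    obtain ⟨i, j, hdij, hij⟩ : ∃ i j, d i = d j ∧ i ≠ j := by
      simpa [Injective] using hd
    refine ⟨single i j 1 - single j i 1, ?_, fun h => ?_, fun a b hab => ?_⟩
    · rw [transpose_sub, transpose_single, transpose_single, neg_sub]
    · simpa [single_apply, hij] using congr_fun₂ h i j
    · have hij_ne : ¬ (i = a ∧ j = b) := by rintro ⟨rfl, rfl⟩; exact hab hdij
      have hji_ne : ¬ (j = a ∧ i = b) := by rintro ⟨rfl, rfl⟩; exact hab hdij.symm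
      rw [sub_apply, single_apply_of_ne _ _ _ _ _ hij_ne, single_apply_of_ne _ _ _ _ _ hji_ne,
        sub_zero]

end Matrix

/-- Lax's criterion: a real symmetric matrix has a repeated eigenvalue iff it
commutes with a nonzero real antisymmetric matrix. -/
theorem lax_criterion {n : ℕ} (A : Matrix (Fin n) (Fin n) ℝ) (hA : A.transpose = A) :
    (∃ μ : ℝ, 2 ≤ A.charpoly.rootMultiplicity μ) ↔
      ∃ R : Matrix (Fin n) (Fin n) ℝ, R ≠ 0 ∧ R.transpose = -R ∧ A * R = R * A := by
  have hH : A.IsHermitian := by rwa [IsHermitian, conjTranspose_eq_transpose_of_trivial]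
  calc (∃ μ : ℝ, 2 ≤ A.charpoly.rootMultiplicity μ)
      ↔ ¬ Injective (RCLike.ofReal ∘ hH.eigenvalues) := by
        rw [← not_nodup_roots_iff, hH.roots_charpoly_eq_eigenvalues,
          Fintype.nodup_map_univ_iff_injective]
    _ ↔ ∃ R ∈ skewAdjoint _, R ≠ 0 ∧ Commute (diagonal (RCLike.ofReal ∘ hH.eigenvalues)) R :=
        (exists_mem_skewAdjoint_commute_diagonal_iff _).symm
    _ ↔ ∃ R ∈ skewAdjoint _, R ≠ 0 ∧ Commute A R := by
        conv_rhs => rw [hH.spectral_theorem]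
        exact (StarAlgEquiv.exists_mem_skewAdjoint_commute_apply_iff _ _).symm
    _ ↔ _ := by
        simp only [mem_skewAdjoint_iff_transpose, Commute, SemiconjBy]
        exact exists_congr fun _ => and_left_comm
end

section
/- Let B be the real symmetric 3×3 matrix with entries B₁₁ = u, B₂₂ = v, B₃₃ = w, B₁₂ = B₂₁ = z, B₁₃ = B₃₁ = y, B₂₃ = B₃₂ = x. Assume that at most one of the three off-diagonal coefficients x, y, z is equal to zero. Then there exists a nonzero real antisymmetric 3×3 matrix R with B*R = R*B (equivalently, B has a repeated eigenvalue) if and only if the three equations x(y² − z²) + (v − w)yz = 0, y(z² − x²) + (w − u)zx = 0, and z(x² − y²) + (u − v)xy = 0 all hold. -/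
/-!
An antisymmetric `3 × 3` matrix is `skew3 a b c` for a vector `(a, b, c)`, and `B` commutes with it
iff `x a = y b = z c` and three further linear equations hold. If exactly one of `x, y, z`
vanishes, these force `a = b = c = 0`, and the claimed equations fail too. Otherwise the first
condition makes `(a, b, c)` a multiple of `(y z, z x, x y)`, and at that vector the three further
equations are exactly the claimed ones.
-/

variable {K : Type*} [Field K]

/-- The matrix of `v ↦ v ×₃ ![a, b, c]`. -/
def skew3 (a b c : K) : Matrix (Fin 3) (Fin 3) K :=
  !![0, c, -b; -c, 0, a; b, -a, 0]

theorem transpose_skew3 (a b c : K) : (skew3 a b c).transpose = -skew3 a b c := by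
  ext i j
  fin_cases i <;> fin_cases j <;> simp [skew3]

theorem skew3_eq_zero_iff {a b c : K} : skew3 a b c = 0 ↔ a = 0 ∧ b = 0 ∧ c = 0 := by
  refine ⟨fun h => ⟨?_, ?_, ?_⟩, fun ⟨ha, hb, hc⟩ => ?_⟩
  · simpa [skew3] using congrFun (congrFun h 1) 2
  · simpa [skew3] using congrFun (congrFun h 2) 0
  · simpa [skew3] using congrFun (congrFun h 0) 1
  · ext i j
    fin_cases i <;> fin_cases j <;> simp [skew3, ha, hb, hc]

theorem exists_eq_skew3_of_transpose_eq_neg [CharZero K] {R : Matrix (Fin 3) (Fin 3) K}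
    (hR : R.transpose = -R) : ∃ a b c, R = skew3 a b c := by
  have entry (i j : Fin 3) : R j i = -R i j := by simpa using congrFun (congrFun hR i) j
  have diag (i : Fin 3) : R i i = 0 := self_eq_neg.1 (entry i i)
  refine ⟨R 1 2, R 2 0, R 0 1, ?_⟩
  ext i j
  fin_cases i <;> fin_cases j <;> simp [skew3, diag, entry 0 1, entry 0 2, entry 1 2]

theorem commute_skew3_iff [CharZero K] (u v w x y z a b c : K) :
    Commute !![u, z, y; z, v, x; y, x, w] (skew3 a b c) ↔
      x * a = y * b ∧ y * b = z * c ∧ (v - w) * a = z * b - y * c ∧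
        (w - u) * b = x * c - z * a ∧ (u - v) * c = y * a - x * b := by
  rw [Commute, SemiconjBy, skew3, Matrix.mul_fin_three, Matrix.mul_fin_three, ← Matrix.ext_iff]
  simp only [Fin.forall_fin_succ]
  simp only [mul_zero, mul_neg, zero_add, add_zero, Fin.isValue, Matrix.of_apply, Matrix.cons_val',
    Matrix.cons_val_zero, Matrix.cons_val_fin_one, zero_mul, neg_mul, Fin.succ_zero_eq_one,
    Matrix.cons_val_one, Fin.succ_one_eq_two, Matrix.cons_val, Matrix.cons_val_succ,
    IsEmpty.forall_iff, and_true]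
  constructor
  · rintro ⟨⟨e00, e01, -⟩, ⟨-, e11, e12⟩, e20, -⟩
    exact ⟨by linear_combination (-1 / 2 : K) * (e00 + e11),
      by linear_combination (1 / 2 : K) * e00, by linear_combination e12,
      by linear_combination e20, by linear_combination e01⟩
  · rintro ⟨h1, h2, h3, h4, h5⟩
    refine ⟨⟨?_, ?_, ?_⟩, ⟨?_, ?_, ?_⟩, ?_, ?_, ?_⟩
    · linear_combination 2 * h2
    · linear_combination h5
    · linear_combination h4
    · linear_combination h5
    · linear_combination -2 * (h1 + h2)
    · linear_combination h3
    · linear_combination h4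
    · linear_combination h3
    · linear_combination 2 * h1

theorem skew3_eq_smul_of_mul_eq {x y z a b c : K} (hy : y ≠ 0) (hz : z ≠ 0)
    (hab : x * a = y * b) (hbc : y * b = z * c) :
    skew3 a b c = (a / (y * z)) • skew3 (y * z) (z * x) (x * y) := by
  have hb : b = a / (y * z) * (z * x) := by field_simp; linear_combination -hab
  have hc : c = a / (y * z) * (x * y) := by field_simp; linear_combination -hab - hbc
  ext i j
  fin_cases i <;> fin_cases j <;> simp [skew3, hb, hc] <;> field_simp

theorem commute_skew3_offDiag_iff [CharZero K] (u v w x y z : K) :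
    Commute !![u, z, y; z, v, x; y, x, w] (skew3 (y * z) (z * x) (x * y)) ↔
      x * (y ^ 2 - z ^ 2) + (v - w) * (y * z) = 0 ∧
      y * (z ^ 2 - x ^ 2) + (w - u) * (z * x) = 0 ∧
      z * (x ^ 2 - y ^ 2) + (u - v) * (x * y) = 0 := by
  rw [commute_skew3_iff]
  constructor
  · rintro ⟨-, -, h1, h2, h3⟩
    exact ⟨by linear_combination h1, by linear_combination h2, by linear_combination h3⟩
  · rintro ⟨h1, h2, h3⟩
    exact ⟨by ring, by ring, by linear_combination h1, by linear_combination h2,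
      by linear_combination h3⟩

theorem offDiag_ne_zero_of_commute_skew3 [CharZero K] {u v w x y z a b c : K}
    (h : ¬(x = 0 ∧ y = 0) ∧ ¬(y = 0 ∧ z = 0) ∧ ¬(x = 0 ∧ z = 0))
    (hc : Commute !![u, z, y; z, v, x; y, x, w] (skew3 a b c)) (h0 : skew3 a b c ≠ 0) :
    x ≠ 0 ∧ y ≠ 0 ∧ z ≠ 0 := by
  obtain ⟨h1, h2, h3, h4, h5⟩ := (commute_skew3_iff u v w x y z a b c).1 hc
  rw [Ne, skew3_eq_zero_iff] at h0
  refine ⟨fun hx => h0 ?_, fun hy => h0 ?_, fun hz => h0 ?_⟩ <;> grind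

theorem offDiag_ne_zero_of_C2 {u v w x y z : K}
    (h : ¬(x = 0 ∧ y = 0) ∧ ¬(y = 0 ∧ z = 0) ∧ ¬(x = 0 ∧ z = 0))
    (hC : x * (y ^ 2 - z ^ 2) + (v - w) * (y * z) = 0 ∧
      y * (z ^ 2 - x ^ 2) + (w - u) * (z * x) = 0 ∧
      z * (x ^ 2 - y ^ 2) + (u - v) * (x * y) = 0) :
    x ≠ 0 ∧ y ≠ 0 ∧ z ≠ 0 := by
  obtain ⟨h1, h2, h3⟩ := hC
  refine ⟨fun hx => ?_, fun hy => ?_, fun hz => ?_⟩ <;> grind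

/-- Degeneracy of a symmetric 3×3 matrix when at most one off-diagonal entry vanishes:
the equations (C₂). -/
theorem degeneracy_C2 (u v w x y z : ℝ)
    (h : ¬(x = 0 ∧ y = 0) ∧ ¬(y = 0 ∧ z = 0) ∧ ¬(x = 0 ∧ z = 0)) :
    (∃ R : Matrix (Fin 3) (Fin 3) ℝ, R ≠ 0 ∧ R.transpose = -R ∧
        !![u, z, y; z, v, x; y, x, w] * R = R * !![u, z, y; z, v, x; y, x, w]) ↔
      (x * (y ^ 2 - z ^ 2) + (v - w) * (y * z) = 0 ∧
       y * (z ^ 2 - x ^ 2) + (w - u) * (z * x) = 0 ∧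
       z * (x ^ 2 - y ^ 2) + (u - v) * (x * y) = 0) := by
  constructor
  · rintro ⟨R, hR0, hRT, hc⟩
    obtain ⟨a, b, c, rfl⟩ := exists_eq_skew3_of_transpose_eq_neg hRT
    obtain ⟨-, hy, hz⟩ := offDiag_ne_zero_of_commute_skew3 h hc hR0
    obtain ⟨hab, hbc, -⟩ := (commute_skew3_iff u v w x y z a b c).1 hc
    rw [skew3_eq_smul_of_mul_eq hy hz hab hbc] at hR0 hc
    have hs : a / (y * z) ≠ 0 := fun hs => hR0 (by rw [hs, zero_smul])
    exact (commute_skew3_offDiag_iff u v w x y z).1 ((Commute.smul_right_iff₀ hs).1 hc)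
  · intro hC
    obtain ⟨-, hy, hz⟩ := offDiag_ne_zero_of_C2 h hC
    refine ⟨skew3 (y * z) (z * x) (x * y), ?_, transpose_skew3 _ _ _,
      (commute_skew3_offDiag_iff u v w x y z).2 hC⟩
    rw [Ne, skew3_eq_zero_iff]
    exact fun habc => mul_ne_zero hy hz habc.1
end

section
/- Let B be the real symmetric 3×3 matrix [[u, z, 0], [z, v, 0], [0, 0, w]] (i.e., with the two off-diagonal coefficients B₁₃ and B₂₃ equal to zero). Then B has a repeated eigenvalue if and only if either (z = 0 and (u − v)(v − w)(w − u) = 0) or (z ≠ 0 and z² + (v − w)(w − u) = 0). -/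
/-!
The characteristic polynomial factors as `q * (X - w)`, where `q = X² - (u + v) X + (u v - z²)`
is that of the upper `2 × 2` block. A repeated root is therefore either a double root of `q`,
which needs the discriminant `(u - v)² + 4 z²` to vanish, i.e. `u = v` and `z = 0`, or the
root `w` of the linear factor being a root of `q`, and `q(w) = -(z² + (v - w)(w - u))`.
-/

open Polynomial

namespace Polynomial

theorem X_sq_sub_C_mul_X_add_C_ne_zero {R : Type*} [CommRing R] [Nontrivial R] (s p : R) :
    (X ^ 2 - C s * X + C p : R[X]) ≠ 0 := by
  intro h
  simpa using congrArg (coeff · 2) h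

theorem exists_two_le_rootMultiplicity_X_sq_sub_C_mul_X_add_C_iff {K : Type*} [Field K]
    [NeZero (2 : K)] (s p : K) :
    (∃ μ, 2 ≤ (X ^ 2 - C s * X + C p).rootMultiplicity μ) ↔ s ^ 2 = 4 * p := by
  simp only [Nat.succ_le_iff,
    one_lt_rootMultiplicity_iff_isRoot (X_sq_sub_C_mul_X_add_C_ne_zero s p)]
  simp only [IsRoot, eval_add, eval_sub, eval_pow, eval_X, eval_mul, eval_C,
    derivative_sub, derivative_X_pow_succ, Nat.cast_one, map_add, map_one, pow_one, derivative_mul,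
    derivative_C, zero_mul, derivative_X, mul_one, zero_add, add_zero, eval_one]
  constructor
  · rintro ⟨μ, hroot, hderiv⟩
    linear_combination (-4) * hroot + (2 * μ - s) * hderiv
  · intro h
    refine ⟨s / 2, ?_, ?_⟩
    · field_simp; linear_combination -h
    · field_simp; ring

theorem exists_two_le_rootMultiplicity_mul_X_sub_C_iff {R : Type*} [CommRing R] [IsDomain R]
    {p : R[X]} (hp : p ≠ 0) (w : R) :
    (∃ μ, 2 ≤ (p * (X - C w)).rootMultiplicity μ) ↔ p.IsRoot w ∨ ∃ μ, 2 ≤ p.rootMultiplicity μ := by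
  classical
  simp only [rootMultiplicity_mul (mul_ne_zero hp (X_sub_C_ne_zero w)), rootMultiplicity_X_sub_C]
  constructor
  · rintro ⟨μ, hμ⟩
    by_cases hμw : μ = w
    · subst hμw
      exact Or.inl ((rootMultiplicity_pos hp).1 (by simp only [↓reduceIte] at hμ; omega))
    · exact Or.inr ⟨μ, by simpa [hμw] using hμ⟩
  · rintro (hw | ⟨μ, hμ⟩)
    · exact ⟨w, by simpa [Nat.one_le_iff_ne_zero] using ⟨hw, hp⟩⟩
    · exact ⟨μ, le_add_right hμ⟩

end Polynomial

namespace Matrix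

theorem charpoly_fin_three_of_blockDiag {R : Type*} [CommRing R] (a b c d w : R) :
    (!![a, b, 0; c, d, 0; 0, 0, w]).charpoly
      = (X ^ 2 - C (a + d) * X + C (a * d - b * c)) * (X - C w) := by
  rw [charpoly, det_fin_three]
  simp only [Fin.isValue, charmatrix_apply_eq, of_apply, cons_val', cons_val_zero, cons_val_fin_one,
    cons_val_one, cons_val, ne_eq, Fin.reduceEq, not_false_eq_true, charmatrix_apply_ne, map_zero,
    neg_zero, mul_zero, sub_zero, mul_neg, neg_mul, neg_neg, add_zero, zero_mul, map_add,
    map_sub, map_mul]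
  ring

end Matrix

/-- Degeneracy of a symmetric 3×3 matrix with two vanishing off-diagonal entries:
the equations (C₁). -/
theorem degeneracy_C1 (u v w z : ℝ) :
    (∃ μ : ℝ, 2 ≤ (Matrix.charpoly !![u, z, 0; z, v, 0; 0, 0, w]).rootMultiplicity μ) ↔
      ((z = 0 ∧ (u - v) * (v - w) * (w - u) = 0) ∨
       (z ≠ 0 ∧ z ^ 2 + (v - w) * (w - u) = 0)) := by
  rw [Matrix.charpoly_fin_three_of_blockDiag, exists_two_le_rootMultiplicity_mul_X_sub_C_iff
    (X_sq_sub_C_mul_X_add_C_ne_zero _ _), exists_two_le_rootMultiplicity_X_sq_sub_C_mul_X_add_C_iff]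
  simp only [IsRoot, eval_add, eval_sub, eval_mul, eval_pow, eval_X, eval_C]
  have hroot : w ^ 2 - (u + v) * w + (u * v - z * z) = -(z ^ 2 + (v - w) * (w - u)) := by ring
  have hdisc : (u + v) ^ 2 = 4 * (u * v - z * z) ↔ u = v ∧ z = 0 := by
    constructor
    · intro h
      have hsum : (u - v) ^ 2 + 4 * z ^ 2 = 0 := by linear_combination h
      constructor <;> nlinarith [sq_nonneg (u - v), sq_nonneg z]
    · rintro ⟨rfl, rfl⟩
      ring
  rw [hroot, neg_eq_zero, hdisc]
  rcases eq_or_ne z 0 with rfl | hz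
  · simp only [ne_eq, not_true_eq_false, false_and, or_false, true_and, and_true,
      zero_pow two_ne_zero, zero_add, mul_eq_zero, sub_eq_zero]
    tauto
  · simp [hz]
end

section
/- Let m1, m2, m3, m4 be positive real numbers and M = m1 + m2 + m3 + m4, and let B be the real symmetric 3×3 matrix with B₁₁ = (m2+m4)(m1²+m3²)/(2M(m1+m3)) + (m1+m3)(m2²+m4²)/(2M(m2+m4)), B₁₂ = B₂₁ = −(1/2)·√(m1·m3·(m2+m4)/M)·(m3−m1)/(m1+m3), B₁₃ = B₃₁ = −(1/2)·√(m2·m4·(m1+m3)/M)·(m2−m4)/(m2+m4), B₂₂ = m1·m3/(m1+m3), B₂₃ = B₃₂ = 0, B₃₃ = m2·m4/(m2+m4). Then B has a repeated eigenvalue if and only if at least three of the four masses m1, m2, m3, m4 are equal, i.e., there exist three distinct indices i, j, k in {1,2,3,4} with m_i = m_j = m_k. (Proposition 3.1: degeneracy of the intrinsic inertia matrix of the regular tetrahedron.) -/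
/-!
The matrix is an arrowhead matrix `!![a, b, c; b, d, 0; c, 0, e]`, with characteristic polynomial
`p = (X - a)(X - d)(X - e) - b²(X - e) - c²(X - d)`. At a double root `μ`, with `G = (μ - d)(μ - e)`,
the combination `G² p'(μ) - (2μ - d - e) G p(μ)` equals `G (G² + b²(μ - e)² + c²(μ - d)²)`, so over
`ℝ` every double root is `d` or `e`; and `d` is a double root iff `b = 0` and `(d - a)(d - e) = c²`.
For the inertia matrix `b = 0` iff `m1 = m3`, and then, with `M = m1 + m2 + m3 + m4`,
`(d - a)(d - e) - c² = m1 (m1 - m2)(m1 - m4) / 2M`; the root `e` is the same computation with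
`(m1, m3)` and `(m2, m4)` exchanged.
-/

open Polynomial

noncomputable def arrowheadCubic {R : Type*} [CommRing R] (a b c d e : R) : R[X] :=
  (X - C a) * (X - C d) * (X - C e) - C (b ^ 2) * (X - C e) - C (c ^ 2) * (X - C d)

section CommRing

variable {R : Type*} [CommRing R] (a b c d e : R)

theorem charpoly_arrowhead :
    (!![a, b, c; b, d, 0; c, 0, e]).charpoly = arrowheadCubic a b c d e := by
  rw [Matrix.charpoly, Matrix.det_fin_three, arrowheadCubic]
  simp only [Matrix.charmatrix_apply_eq, Matrix.charmatrix_apply_ne, Matrix.of_apply,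
    Matrix.cons_val', Matrix.cons_val_zero, Matrix.cons_val_fin_one, Matrix.cons_val_one,
    Matrix.cons_val, ne_eq, Fin.reduceEq, not_false_eq_true, map_zero, map_pow, neg_zero]
  ring

theorem arrowheadCubic_swap : arrowheadCubic a b c d e = arrowheadCubic a c b e d := by
  unfold arrowheadCubic; ring

theorem arrowheadCubic_monic [Nontrivial R] : (arrowheadCubic a b c d e).Monic := by
  unfold arrowheadCubic; monicity!

theorem eval_arrowheadCubic (x : R) : (arrowheadCubic a b c d e).eval x =
    (x - a) * (x - d) * (x - e) - b ^ 2 * (x - e) - c ^ 2 * (x - d) := by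
  simp [arrowheadCubic]

theorem eval_derivative_arrowheadCubic (x : R) : (derivative (arrowheadCubic a b c d e)).eval x =
    (x - d) * (x - e) + (x - a) * (x - e) + (x - a) * (x - d) - b ^ 2 - c ^ 2 := by
  simp only [arrowheadCubic, derivative_sub, derivative_mul, derivative_X, derivative_C,
    eval_sub, eval_add, eval_mul, eval_X, eval_C, eval_one, eval_zero]
  ring

end CommRing

section Real

variable {a b c d e : ℝ}

theorem arrowheadCubic_double_root {μ : ℝ} (h₀ : (arrowheadCubic a b c d e).IsRoot μ)
    (h₁ : (derivative (arrowheadCubic a b c d e)).IsRoot μ) : μ = d ∨ μ = e := by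
  rw [IsRoot, eval_arrowheadCubic] at h₀
  rw [IsRoot, eval_derivative_arrowheadCubic] at h₁
  set G := (μ - d) * (μ - e)
  have key : G * (G ^ 2 + (b * (μ - e)) ^ 2 + (c * (μ - d)) ^ 2) = 0 := by
    linear_combination G ^ 2 * h₁ - (2 * μ - d - e) * G * h₀
  have hG : G = 0 := by
    rcases mul_eq_zero.mp key with h | h
    · exact h
    · nlinarith [sq_nonneg G, sq_nonneg (b * (μ - e)), sq_nonneg (c * (μ - d))]
  simpa [G, sub_eq_zero] using hG

theorem arrowheadCubic_double_root_left_iff :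
    ((arrowheadCubic a b c d e).IsRoot d ∧ (derivative (arrowheadCubic a b c d e)).IsRoot d) ↔
      b = 0 ∧ (d - a) * (d - e) = c ^ 2 := by
  simp only [IsRoot, eval_arrowheadCubic, eval_derivative_arrowheadCubic]
  constructor
  · rintro ⟨h₀, h₁⟩
    have hb : b ^ 2 * (d - e) = 0 := by linear_combination -h₀
    rcases mul_eq_zero.mp hb with hb | hde
    · have hb : b = 0 := pow_eq_zero_iff two_ne_zero |>.mp hb
      exact ⟨hb, by subst hb; linear_combination h₁⟩
    · have hbc : b ^ 2 + c ^ 2 = 0 := by linear_combination -h₁ + (d - a) * hde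
      have hb : b = 0 := by nlinarith [sq_nonneg b, sq_nonneg c]
      have hc : c = 0 := by nlinarith [sq_nonneg b, sq_nonneg c]
      exact ⟨hb, by subst hb hc; linear_combination (d - a) * hde⟩
  · rintro ⟨rfl, h⟩
    exact ⟨by ring, by linear_combination h⟩

theorem exists_two_le_rootMultiplicity_arrowheadCubic_iff :
    (∃ μ, 2 ≤ (arrowheadCubic a b c d e).rootMultiplicity μ) ↔
      (b = 0 ∧ (d - a) * (d - e) = c ^ 2) ∨ (c = 0 ∧ (e - a) * (e - d) = b ^ 2) := by
  have double_root_iff (b c d e μ : ℝ) :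
      2 ≤ (arrowheadCubic a b c d e).rootMultiplicity μ ↔
        (arrowheadCubic a b c d e).IsRoot μ ∧ (derivative (arrowheadCubic a b c d e)).IsRoot μ :=
    one_lt_rootMultiplicity_iff_isRoot (arrowheadCubic_monic a b c d e).ne_zero
  simp_rw [double_root_iff]
  rw [← arrowheadCubic_double_root_left_iff,
    ← arrowheadCubic_double_root_left_iff (b := c) (c := b) (d := e) (e := d),
    arrowheadCubic_swap a c b e d]
  constructor
  · rintro ⟨μ, hμ⟩
    rcases arrowheadCubic_double_root hμ.1 hμ.2 with rfl | rfl
    exacts [.inl hμ, .inr hμ]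
  · rintro (h | h)
    exacts [⟨d, h⟩, ⟨e, h⟩]

end Real

theorem neg_half_mul_sqrt_mul_div_eq_zero_iff {x s p q : ℝ} (hx : 0 < x) (hs : s ≠ 0) :
    -(1 / 2) * √x * ((p - q) / s) = 0 ↔ p = q := by
  simp [Real.sqrt_ne_zero'.mpr hx, hs, sub_eq_zero]

theorem neg_half_mul_sqrt_mul_sq {x : ℝ} (hx : 0 ≤ x) (y : ℝ) :
    (-(1 / 2) * √x * y) ^ 2 = x * y ^ 2 / 4 := by
  rw [mul_pow, mul_pow, Real.sq_sqrt hx]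
  ring

theorem exists_three_eq_fin_four_iff {α : Type*} (m : Fin 4 → α) :
    (∃ i j k : Fin 4, i ≠ j ∧ j ≠ k ∧ i ≠ k ∧ m i = m j ∧ m j = m k) ↔
      (m 0 = m 2 ∧ (m 0 = m 1 ∨ m 0 = m 3)) ∨ (m 1 = m 3 ∧ (m 1 = m 0 ∨ m 1 = m 2)) := by
  constructor
  · rintro ⟨i, j, k, hij, hjk, hik, e1, e2⟩
    fin_cases i <;> fin_cases j <;> fin_cases k <;> simp_all
  · rintro (⟨h02, h01 | h03⟩ | ⟨h13, h10 | h12⟩)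
    · exact ⟨0, 1, 2, by decide, by decide, by decide, h01, h01 ▸ h02⟩
    · exact ⟨0, 2, 3, by decide, by decide, by decide, h02, h02 ▸ h03⟩
    · exact ⟨0, 1, 3, by decide, by decide, by decide, h10.symm, h13⟩
    · exact ⟨1, 2, 3, by decide, by decide, by decide, h12, h12 ▸ h13⟩

theorem tetrahedron_inertia_double_root_condition_iff {m1 m2 m3 m4 M a b c d e : ℝ}
    (h1 : 0 < m1) (h2 : 0 < m2) (h3 : 0 < m3) (h4 : 0 < m4) (hM : M = m1 + m2 + m3 + m4)
    (ha : a = (m2 + m4) * (m1 ^ 2 + m3 ^ 2) / (2 * M * (m1 + m3))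
      + (m1 + m3) * (m2 ^ 2 + m4 ^ 2) / (2 * M * (m2 + m4)))
    (hb : b = 0 ↔ m1 = m3)
    (hc : c ^ 2 = m2 * m4 * (m1 + m3) / M * ((m2 - m4) / (m2 + m4)) ^ 2 / 4)
    (hd : d = m1 * m3 / (m1 + m3)) (he : e = m2 * m4 / (m2 + m4)) :
    (b = 0 ∧ (d - a) * (d - e) = c ^ 2) ↔ m1 = m3 ∧ (m1 = m2 ∨ m1 = m4) := by
  rw [hb]
  refine and_congr_right fun h13 ↦ ?_
  subst h13 hM
  have key :
      (d - a) * (d - e) - c ^ 2 = m1 * ((m1 - m2) * (m1 - m4)) / (2 * (m1 + m2 + m1 + m4)) := by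
    rw [ha, hc, hd, he]
    field_simp
    ring
  rw [← sub_eq_zero, key]
  simp [h1.ne', (by positivity : m1 + m2 + m1 + m4 ≠ 0), sub_eq_zero]

/-- Proposition 3.1: the intrinsic inertia matrix of the regular tetrahedron with unit
sides is degenerate (has a repeated eigenvalue) iff at least three of the masses are
equal. -/
theorem inertia_tetrahedron_degenerate_iff (m1 m2 m3 m4 : ℝ)
    (h1 : 0 < m1) (h2 : 0 < m2) (h3 : 0 < m3) (h4 : 0 < m4) :
    (∃ μ : ℝ, 2 ≤ (Matrix.charpoly
      !![(m2 + m4) * (m1 ^ 2 + m3 ^ 2) / (2 * (m1 + m2 + m3 + m4) * (m1 + m3))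
           + (m1 + m3) * (m2 ^ 2 + m4 ^ 2) / (2 * (m1 + m2 + m3 + m4) * (m2 + m4)),
         -(1 / 2) * Real.sqrt (m1 * m3 * (m2 + m4) / (m1 + m2 + m3 + m4))
           * ((m3 - m1) / (m1 + m3)),
         -(1 / 2) * Real.sqrt (m2 * m4 * (m1 + m3) / (m1 + m2 + m3 + m4))
           * ((m2 - m4) / (m2 + m4));
         -(1 / 2) * Real.sqrt (m1 * m3 * (m2 + m4) / (m1 + m2 + m3 + m4))
           * ((m3 - m1) / (m1 + m3)),
         m1 * m3 / (m1 + m3), 0;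
         -(1 / 2) * Real.sqrt (m2 * m4 * (m1 + m3) / (m1 + m2 + m3 + m4))
           * ((m2 - m4) / (m2 + m4)),
         0, m2 * m4 / (m2 + m4)]).rootMultiplicity μ) ↔
      (∃ i j k : Fin 4, i ≠ j ∧ j ≠ k ∧ i ≠ k ∧
        ![m1, m2, m3, m4] i = ![m1, m2, m3, m4] j ∧
        ![m1, m2, m3, m4] j = ![m1, m2, m3, m4] k) := by
  set M := m1 + m2 + m3 + m4 with hM
  have h13 : 0 < m1 * m3 * (m2 + m4) / M := by positivity
  have h24 : 0 < m2 * m4 * (m1 + m3) / M := by positivity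
  rw [charpoly_arrowhead, exists_two_le_rootMultiplicity_arrowheadCubic_iff,
    exists_three_eq_fin_four_iff,
    tetrahedron_inertia_double_root_condition_iff h1 h2 h3 h4 hM rfl
      ((neg_half_mul_sqrt_mul_div_eq_zero_iff h13 (by positivity)).trans eq_comm)
      (neg_half_mul_sqrt_mul_sq h24.le _) rfl rfl,
    tetrahedron_inertia_double_root_condition_iff h2 h1 h4 h3 (hM.trans (by ring)) (add_comm _ _)
      (neg_half_mul_sqrt_mul_div_eq_zero_iff h24 (by positivity))
      (by rw [neg_half_mul_sqrt_mul_sq h13.le]; ring) rfl rfl]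
  exact Iff.rfl
end

section
/- Let m1, m2 be positive real numbers and let B be the real symmetric 3×3 matrix with B₁₁ = m2(3m1² + 3m2² + 2m1m2)/(2(m1+3m2)(m1+m2)), B₁₂ = B₂₁ = −(m2/2)·√(2m1/(m1+3m2))·(m2−m1)/(m1+m2), B₂₂ = m1m2/(m1+m2), B₁₃ = B₃₁ = B₂₃ = B₃₂ = 0, B₃₃ = m2/2. Then the characteristic polynomial of B equals (X − 2m1m2/(m1+3m2))·(X − m2/2)²; in particular the eigenvalues of B are λ₁ = 2m1m2/(m1+3m2) and the double eigenvalue λ₂ = λ₃ = m2/2. -/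
/-! The matrix splits into a symmetric 2×2 block and the 1×1 block `m2/2`, so its characteristic
polynomial is that of the 2×2 block times `X - m2/2`. The 2×2 block has trace
`2 m1 m2/(m1+3m2) + m2/2` and determinant `2 m1 m2/(m1+3m2) · m2/2`, hence these are its
eigenvalues. -/

open Polynomial

theorem Matrix.charpoly_fin_three_block_eq_of_trace_det {R : Type*} [CommRing R]
    (a b c d e p q : R) (htrace : a + d = p + q) (hdet : a * d - b * c = p * q) :
    Matrix.charpoly !![a, b, 0; c, d, 0; 0, 0, e] = (X - C p) * (X - C q) * (X - C e) := by
  rw [Matrix.charpoly, Matrix.det_fin_three]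
  simp only [Fin.isValue, charmatrix_apply_eq, of_apply, cons_val', cons_val_zero, cons_val_fin_one,
    cons_val_one, cons_val, ne_eq, Fin.reduceEq, not_false_eq_true, charmatrix_apply_ne, map_zero,
    neg_zero, mul_zero, sub_zero, zero_ne_one, one_ne_zero, mul_neg, neg_mul, neg_neg, add_zero,
    zero_mul]
  have htraceC : C a + C d = C p + C q := by simp only [← C_add, htrace]
  have hdetC : C a * C d - C b * C c = C p * C q := by simp only [← C_mul, ← C_sub, hdet]
  linear_combination (X - C e) * hdetC - X * (X - C e) * htraceC

/-- The inertia matrix of the regular tetrahedron with three equal masses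
(m2 = m3 = m4) has characteristic polynomial
(X − 2m1m2/(m1+3m2))·(X − m2/2)². -/
theorem inertia_three_equal_masses_charpoly (m1 m2 : ℝ) (h1 : 0 < m1) (h2 : 0 < m2) :
    Matrix.charpoly
      !![m2 * (3 * m1 ^ 2 + 3 * m2 ^ 2 + 2 * m1 * m2) / (2 * (m1 + 3 * m2) * (m1 + m2)),
         -(m2 / 2) * Real.sqrt (2 * m1 / (m1 + 3 * m2)) * ((m2 - m1) / (m1 + m2)), 0;
         -(m2 / 2) * Real.sqrt (2 * m1 / (m1 + 3 * m2)) * ((m2 - m1) / (m1 + m2)),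
         m1 * m2 / (m1 + m2), 0;
         0, 0, m2 / 2]
      = (X - C (2 * m1 * m2 / (m1 + 3 * m2))) * (X - C (m2 / 2)) ^ 2 := by
  have hd : m1 + 3 * m2 ≠ 0 := by positivity
  have hm : m1 + m2 ≠ 0 := by positivity
  have hsqrt : Real.sqrt (2 * m1 / (m1 + 3 * m2)) ^ 2 = 2 * m1 / (m1 + 3 * m2) :=
    Real.sq_sqrt (by positivity)
  rw [sq (X - C (m2 / 2)), ← mul_assoc]
  apply Matrix.charpoly_fin_three_block_eq_of_trace_det
  · field_simp
    ring
  · set s := Real.sqrt (2 * m1 / (m1 + 3 * m2))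
    have hoff :
        (-(m2 / 2) * s * ((m2 - m1) / (m1 + m2))) * (-(m2 / 2) * s * ((m2 - m1) / (m1 + m2)))
          = (m2 / 2) ^ 2 * (2 * m1 / (m1 + 3 * m2)) * ((m2 - m1) / (m1 + m2)) ^ 2 := by
      rw [← hsqrt]
      ring
    rw [hoff]
    field_simp
    ring
end

section
/- Let X be a real m×k matrix, A a real symmetric k×k matrix, and Ω a real antisymmetric m×m matrix such that Ω²X = 2XA (the relative equilibrium equation). Set B = XᵀX and S = XXᵀ. Then A commutes with B and Ω² commutes with S: A*B = B*A and Ω²*S = S*Ω². -/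
/-!
If symmetric matrices `P` and `Q` intertwine `X`, i.e. `P X = X Q`, then transposing gives
`Q Xᵀ = Xᵀ P`, so `Q (XᵀX) = Xᵀ P X = (XᵀX) Q` and `P (XXᵀ) = X Q Xᵀ = (XXᵀ) P`. The relative
equilibrium equation is such an intertwining with `P = Ω²/2`, symmetric because `Ω` is
antisymmetric, and `Q = A`.
-/

namespace Matrix

variable {m n : Type*} [Fintype m] [Fintype n]

theorem isSymm_sq_of_transpose_eq_neg {R : Type*} [CommRing R] [DecidableEq m]
    {Ω : Matrix m m R} (hΩ : Ωᵀ = -Ω) : (Ω ^ 2).IsSymm := by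
  show (Ω ^ 2)ᵀ = Ω ^ 2
  rw [sq, transpose_mul, hΩ, neg_mul_neg]

variable {R : Type*} [CommSemiring R]

theorem IsSymm.mul_transpose_eq_of_mul_eq {P : Matrix m m R} {Q : Matrix n n R}
    {X : Matrix m n R} (hP : P.IsSymm) (hQ : Q.IsSymm) (h : P * X = X * Q) :
    Q * Xᵀ = Xᵀ * P := by
  simpa only [transpose_mul, hP.eq, hQ.eq] using (congrArg Matrix.transpose h).symm

theorem IsSymm.commute_transpose_mul_self_of_mul_eq {P : Matrix m m R} {Q : Matrix n n R}
    {X : Matrix m n R} (hP : P.IsSymm) (hQ : Q.IsSymm) (h : P * X = X * Q) :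
    Commute Q (Xᵀ * X) := by
  calc Q * (Xᵀ * X) = Xᵀ * P * X := by
        rw [← Matrix.mul_assoc, hP.mul_transpose_eq_of_mul_eq hQ h]
    _ = Xᵀ * X * Q := by rw [Matrix.mul_assoc, h, Matrix.mul_assoc]

theorem IsSymm.commute_mul_transpose_self_of_mul_eq {P : Matrix m m R} {Q : Matrix n n R}
    {X : Matrix m n R} (hP : P.IsSymm) (hQ : Q.IsSymm) (h : P * X = X * Q) :
    Commute P (X * Xᵀ) := by
  simpa only [transpose_transpose] using
    hQ.commute_transpose_mul_self_of_mul_eq hP (hP.mul_transpose_eq_of_mul_eq hQ h)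

end Matrix

/-- The relative-equilibrium equation Ω²X = 2XA implies the commutations
[A, B] = 0 and [Ω², S] = 0, where B = XᵀX and S = XXᵀ. -/
theorem balanced_commutations {m k : ℕ}
    (X : Matrix (Fin m) (Fin k) ℝ) (A : Matrix (Fin k) (Fin k) ℝ)
    (Ω : Matrix (Fin m) (Fin m) ℝ)
    (hA : A.transpose = A) (hΩ : Ω.transpose = -Ω)
    (hre : Ω ^ 2 * X = (2 : ℝ) • (X * A)) :
    A * (X.transpose * X) = (X.transpose * X) * A ∧
      Ω ^ 2 * (X * X.transpose) = (X * X.transpose) * Ω ^ 2 := by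
  have hP : ((2 : ℝ)⁻¹ • Ω ^ 2).IsSymm := (Matrix.isSymm_sq_of_transpose_eq_neg hΩ).smul _
  have h : ((2 : ℝ)⁻¹ • Ω ^ 2) * X = X * A := by
    rw [Matrix.smul_mul, hre, inv_smul_smul₀ two_ne_zero]
  refine ⟨hP.commute_transpose_mul_self_of_mul_eq hA h, ?_⟩
  refine Commute.eq ?_
  simpa only [smul_smul, mul_inv_cancel₀ (two_ne_zero (α := ℝ)), one_smul] using
    (hP.commute_mul_transpose_self_of_mul_eq hA h).smul_left (2 : ℝ)
end

section
/- Let m1, m2, m3, m4 be real numbers and let K be the real 4×6 matrix K = [[m3−m1, 0, m1−m2, 0, m2−m3, 0], [0, m4−m1, m1−m2, 0, 0, m2−m4], [m1−m3, m4−m1, 0, m3−m4, 0, 0], [0, 0, 0, m3−m4, m2−m3, m4−m2]]. Then: the rank of K is 0 if and only if m1 = m2 = m3 = m4; if exactly three of the masses are equal (three of them coincide but not all four), the rank of K is 2; and if no three of the masses are equal, the rank of K is 3. -/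
/-!
Each row of `K` involves only the three masses of one face of the tetrahedron (row `0` the
masses `m1, m2, m3`, row `1` the masses `m1, m2, m4`, row `2` the masses `m1, m3, m4`, row `3`
the masses `m2, m3, m4`) and vanishes exactly when these are equal. The rows always satisfy
`r₀ - r₁ + r₂ - r₃ = 0`, so `rank K ≤ 3`; if three masses coincide, a row vanishes as well, and
the two independent left null vectors give `rank K ≤ 2`. The lower bounds come from suitable
`2 × 2` and `3 × 3` minors, which are products of mass differences.
-/

open Matrix Module

namespace Matrix

variable {m n 𝕜 : Type*} [Fintype n] [Field 𝕜]

theorem le_rank_of_det_submatrix_ne_zero [DecidableEq m] [DecidableEq n] {r : ℕ}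
    (A : Matrix m n 𝕜) (f : Fin r → m) (g : Fin r → n) (h : (A.submatrix f g).det ≠ 0) :
    r ≤ A.rank := by
  simpa using (rank_of_det_ne_zero h).symm.le.trans (rank_submatrix_le A f g)

theorem rank_add_le_card_of_vecMul_eq_zero [Fintype m] {k : ℕ} (A : Matrix m n 𝕜)
    (u : Fin k → m → 𝕜) (hu : LinearIndependent 𝕜 u) (h : ∀ i, u i ᵥ* A = 0) :
    A.rank + k ≤ Fintype.card m := by
  have hker : Submodule.span 𝕜 (Set.range u) ≤ LinearMap.ker Aᵀ.mulVecLin := by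
    rw [Submodule.span_le]
    rintro _ ⟨i, rfl⟩
    simp [h i]
  calc A.rank + k = finrank 𝕜 (LinearMap.range Aᵀ.mulVecLin) +
        finrank 𝕜 (Submodule.span 𝕜 (Set.range u)) := by
        rw [← rank_transpose, finrank_span_eq_card hu, Fintype.card_fin, rank]
    _ ≤ finrank 𝕜 (LinearMap.range Aᵀ.mulVecLin) + finrank 𝕜 (LinearMap.ker Aᵀ.mulVecLin) := by
        gcongr
        exact Submodule.finrank_mono hker
    _ = Fintype.card m := by
        rw [LinearMap.finrank_range_add_finrank_ker, finrank_fintype_fun_eq_card]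

end Matrix

def linearizedBalanceMatrix (m1 m2 m3 m4 : ℝ) : Matrix (Fin 4) (Fin 6) ℝ :=
  !![m3 - m1, 0, m1 - m2, 0, m2 - m3, 0;
     0, m4 - m1, m1 - m2, 0, 0, m2 - m4;
     m1 - m3, m4 - m1, 0, m3 - m4, 0, 0;
     0, 0, 0, m3 - m4, m2 - m3, m4 - m2]

section

variable (m1 m2 m3 m4 : ℝ)

local notation "𝕂" => linearizedBalanceMatrix m1 m2 m3 m4

theorem linearizedBalanceMatrix_self (a : ℝ) : linearizedBalanceMatrix a a a a = 0 := by
  ext i j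
  fin_cases i <;> fin_cases j <;> simp [linearizedBalanceMatrix]

theorem alternating_vecMul_linearizedBalanceMatrix : ![(1 : ℝ), -1, 1, -1] ᵥ* 𝕂 = 0 := by
  ext j
  fin_cases j <;> simp [linearizedBalanceMatrix, vecMul, dotProduct, Fin.sum_univ_four]

theorem rank_linearizedBalanceMatrix_le_three : (𝕂).rank ≤ 3 := by
  have := (𝕂).rank_add_le_card_of_vecMul_eq_zero ![![1, -1, 1, -1]]
    (linearIndependent_unique_iff.2 (by simp))
    (Fin.forall_fin_one.2 (alternating_vecMul_linearizedBalanceMatrix ..))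
  simpa [Nat.lt_succ_iff] using this

theorem rank_linearizedBalanceMatrix_le_two_of_row_eq_zero (k : Fin 4) (hk : (𝕂).row k = 0) :
    (𝕂).rank ≤ 2 := by
  have hli : LinearIndependent ℝ ![Pi.single k 1, ![(1 : ℝ), -1, 1, -1]] := by
    rw [LinearIndependent.pair_iff' (by simp)]
    intro a ha
    have h0 := congrFun ha 0
    have h1 := congrFun ha 1
    fin_cases k <;> simp at h0 h1
  have := (𝕂).rank_add_le_card_of_vecMul_eq_zero _ hli (Fin.forall_fin_two.2
    ⟨by simpa [single_one_vecMul] using hk, alternating_vecMul_linearizedBalanceMatrix ..⟩)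
  simpa using this

theorem rank_linearizedBalanceMatrix_le_two
    (h : (m1 = m2 ∧ m2 = m3) ∨ (m1 = m2 ∧ m2 = m4) ∨ (m1 = m3 ∧ m3 = m4) ∨
      (m2 = m3 ∧ m3 = m4)) :
    (𝕂).rank ≤ 2 := by
  obtain ⟨k, hk⟩ : ∃ k, (𝕂).row k = 0 := by
    rcases h with ⟨rfl, rfl⟩ | ⟨rfl, rfl⟩ | ⟨rfl, rfl⟩ | ⟨rfl, rfl⟩ <;>
      [use 0; use 1; use 2; use 3] <;>
      · ext j
        fin_cases j <;> simp [linearizedBalanceMatrix]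
  exact rank_linearizedBalanceMatrix_le_two_of_row_eq_zero _ _ _ _ k hk

theorem two_le_rank_linearizedBalanceMatrix (h : ¬(m1 = m2 ∧ m2 = m3 ∧ m3 = m4)) :
    2 ≤ (𝕂).rank := by
  by_cases h13 : m1 = m3
  · by_cases h12 : m1 = m2
    · refine (𝕂).le_rank_of_det_submatrix_ne_zero ![1, 2] ![1, 3] ?_
      rw [det_fin_two]
      simp [linearizedBalanceMatrix, sub_eq_zero]
      grind
    · refine (𝕂).le_rank_of_det_submatrix_ne_zero ![1, 3] ![2, 4] ?_
      rw [det_fin_two]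
      simp [linearizedBalanceMatrix, sub_eq_zero]
      grind
  · by_cases h14 : m1 = m4
    · refine (𝕂).le_rank_of_det_submatrix_ne_zero ![0, 3] ![0, 3] ?_
      rw [det_fin_two]
      simp [linearizedBalanceMatrix, sub_eq_zero]
      grind
    · refine (𝕂).le_rank_of_det_submatrix_ne_zero ![0, 1] ![0, 1] ?_
      rw [det_fin_two]
      simp [linearizedBalanceMatrix, sub_eq_zero]
      grind

theorem three_le_rank_linearizedBalanceMatrix
    (h : ¬((m1 = m2 ∧ m2 = m3) ∨ (m1 = m2 ∧ m2 = m4) ∨ (m1 = m3 ∧ m3 = m4) ∨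
      (m2 = m3 ∧ m3 = m4))) :
    3 ≤ (𝕂).rank := by
  by_cases h12 : m1 = m2
  · refine (𝕂).le_rank_of_det_submatrix_ne_zero ![0, 1, 2] ![0, 4, 5] ?_
    rw [det_fin_three]
    simp [linearizedBalanceMatrix, sub_eq_zero]
    grind
  by_cases h13 : m1 = m3
  · refine (𝕂).le_rank_of_det_submatrix_ne_zero ![0, 1, 2] ![2, 3, 4] ?_
    rw [det_fin_three]
    simp [linearizedBalanceMatrix, sub_eq_zero]
    grind
  by_cases h34 : m3 = m4
  · refine (𝕂).le_rank_of_det_submatrix_ne_zero ![0, 1, 2] ![0, 2, 4] ?_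
    rw [det_fin_three]
    simp [linearizedBalanceMatrix, sub_eq_zero]
    grind
  · refine (𝕂).le_rank_of_det_submatrix_ne_zero ![0, 1, 2] ![0, 2, 3] ?_
    rw [det_fin_three]
    simp [linearizedBalanceMatrix, sub_eq_zero]
    grind

theorem rank_linearizedBalanceMatrix_eq_zero_iff :
    (𝕂).rank = 0 ↔ m1 = m2 ∧ m2 = m3 ∧ m3 = m4 := by
  refine ⟨fun h => ?_, ?_⟩
  · by_contra hne
    have := two_le_rank_linearizedBalanceMatrix _ _ _ _ hne
    omega
  · rintro ⟨rfl, rfl, rfl⟩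
    rw [linearizedBalanceMatrix_self, rank_zero]

end

/-- Rank of the matrix K of the linearization at the regular tetrahedron of the
equations of balanced 4-body configurations: rank 0 iff all four masses are equal,
rank 2 if exactly three are equal, rank 3 if no three are equal. -/
theorem rank_linearized_balanced_equations (m1 m2 m3 m4 : ℝ) :
    (Matrix.rank
        !![m3 - m1, 0, m1 - m2, 0, m2 - m3, 0;
           0, m4 - m1, m1 - m2, 0, 0, m2 - m4;
           m1 - m3, m4 - m1, 0, m3 - m4, 0, 0;
           0, 0, 0, m3 - m4, m2 - m3, m4 - m2] = 0
      ↔ (m1 = m2 ∧ m2 = m3 ∧ m3 = m4)) ∧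
    ((((m1 = m2 ∧ m2 = m3) ∨ (m1 = m2 ∧ m2 = m4) ∨ (m1 = m3 ∧ m3 = m4) ∨
        (m2 = m3 ∧ m3 = m4)) ∧ ¬(m1 = m2 ∧ m2 = m3 ∧ m3 = m4)) →
      Matrix.rank
        !![m3 - m1, 0, m1 - m2, 0, m2 - m3, 0;
           0, m4 - m1, m1 - m2, 0, 0, m2 - m4;
           m1 - m3, m4 - m1, 0, m3 - m4, 0, 0;
           0, 0, 0, m3 - m4, m2 - m3, m4 - m2] = 2) ∧
    (¬((m1 = m2 ∧ m2 = m3) ∨ (m1 = m2 ∧ m2 = m4) ∨ (m1 = m3 ∧ m3 = m4) ∨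
        (m2 = m3 ∧ m3 = m4)) →
      Matrix.rank
        !![m3 - m1, 0, m1 - m2, 0, m2 - m3, 0;
           0, m4 - m1, m1 - m2, 0, 0, m2 - m4;
           m1 - m3, m4 - m1, 0, m3 - m4, 0, 0;
           0, 0, 0, m3 - m4, m2 - m3, m4 - m2] = 3) :=
  ⟨rank_linearizedBalanceMatrix_eq_zero_iff m1 m2 m3 m4,
    fun ⟨hthree, hall⟩ => le_antisymm (rank_linearizedBalanceMatrix_le_two m1 m2 m3 m4 hthree)
      (two_le_rank_linearizedBalanceMatrix m1 m2 m3 m4 hall),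
    fun hthree => le_antisymm (rank_linearizedBalanceMatrix_le_three m1 m2 m3 m4)
      (three_le_rank_linearizedBalanceMatrix m1 m2 m3 m4 hthree)⟩
end

section
/- Let m1, m2, m3, m4 be real numbers such that no three of them are equal, and let K be the real 4×6 matrix K = [[m3−m1, 0, m1−m2, 0, m2−m3, 0], [0, m4−m1, m1−m2, 0, 0, m2−m4], [m1−m3, m4−m1, 0, m3−m4, 0, 0], [0, 0, 0, m3−m4, m2−m3, m4−m2]]. Then the kernel of K (the set of v ∈ ℝ⁶ with Kv = 0) is exactly the linear span of the three vectors E₁ = (1, 1, 1, 1, 1, 1), E₂ = (m2m4, m2m3, m3m4, m1m2, m1m4, m1m3), E₃ = (m2+m4, m2+m3, m3+m4, m1+m2, m1+m4, m1+m3), and these three vectors are linearly independent. -/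
/-!
Row by row, `K v = 0` says that for each face of the tetrahedron the sum of `(mᵢ - mⱼ) vᵢⱼ`
around its boundary vanishes; `E₁`, `E₂`, `E₃` put on each edge `1`, the product and the sum of
the two masses on the opposite edge, and satisfy these equations.

Since no three masses are equal, the pairs of equal masses form a matching of `K₄`, and every
matching lies in one of the Hamiltonian paths `1-2-3-4`, `1-3-2-4`, `1-4-2-3`. The complementary
edges of that path then join unequal masses, and the face equations force a kernel vector that
vanishes on the path to vanish everywhere, so the kernel has dimension at most `3`. On the other
hand the `3 × 3` minor of `(E₁, E₂, E₃)` on the path is, up to sign, the product of the mass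
differences along the complementary path, so the `Eᵢ` are independent and span the kernel.
-/

open Matrix Submodule

theorem Submodule.eq_span_of_linearIndependent_comp {K V ι : Type*} [Field K] [AddCommGroup V]
    [Module K V] [FiniteDimensional K V] [Fintype ι] {W : Submodule K V} {b : ι → V}
    (f : V →ₗ[K] ι → K) (hbW : ∀ i, b i ∈ W) (hfb : LinearIndependent K (f ∘ b))
    (hf : ∀ v ∈ W, f v = 0 → v = 0) :
    W = span K (Set.range b) ∧ LinearIndependent K b := by
  have hb : LinearIndependent K b := hfb.of_comp f
  refine ⟨(eq_of_le_of_finrank_le (span_le.2 (Set.range_subset_iff.2 hbW)) ?_).symm, hb⟩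
  rw [finrank_span_eq_card hb, ← Module.finrank_fintype_fun_eq_card (R := K)]
  refine LinearMap.finrank_le_finrank_of_injective (f := f.domRestrict W) ?_
  rw [← LinearMap.ker_eq_bot, LinearMap.ker_eq_bot']
  exact fun v hv => Subtype.ext (hf v v.2 hv)

theorem Matrix.ker_mulVecLin_eq_span_of_det_ne_zero {K m n ι : Type*} [Field K] [Fintype m]
    [Fintype n] [Fintype ι] [DecidableEq ι] (A : Matrix m n K) {b : ι → n → K} (e : ι → n)
    (hb : ∀ i, A *ᵥ b i = 0) (hdet : (of fun i j => b i (e j)).det ≠ 0)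
    (he : ∀ v, A *ᵥ v = 0 → (∀ j, v (e j) = 0) → v = 0) :
    LinearMap.ker A.mulVecLin = span K (Set.range b) ∧ LinearIndependent K b :=
  Submodule.eq_span_of_linearIndependent_comp (LinearMap.funLeft K K e) hb
    (linearIndependent_rows_of_det_ne_zero hdet) fun v hv hv0 => he v hv (congrFun hv0)

section

variable (m1 m2 m3 m4 : ℝ)

/-- Coordinates are the edges `13, 14, 12, 34, 32, 24`; row `r` is the equation of the face
opposite vertex `4 - r`. -/
def balanceMatrix : Matrix (Fin 4) (Fin 6) ℝ :=
  !![m3 - m1, 0, m1 - m2, 0, m2 - m3, 0;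
     0, m4 - m1, m1 - m2, 0, 0, m2 - m4;
     m1 - m3, m4 - m1, 0, m3 - m4, 0, 0;
     0, 0, 0, m3 - m4, m2 - m3, m4 - m2]

def balanceKernelBasis : Fin 3 → Fin 6 → ℝ :=
  ![![1, 1, 1, 1, 1, 1],
    ![m2 * m4, m2 * m3, m3 * m4, m1 * m2, m1 * m4, m1 * m3],
    ![m2 + m4, m2 + m3, m3 + m4, m1 + m2, m1 + m4, m1 + m3]]

theorem balanceMatrix_mulVec_eq_zero_iff (v : Fin 6 → ℝ) :
    balanceMatrix m1 m2 m3 m4 *ᵥ v = 0 ↔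
      (m3 - m1) * v 0 + (m1 - m2) * v 2 + (m2 - m3) * v 4 = 0 ∧
      (m4 - m1) * v 1 + (m1 - m2) * v 2 + (m2 - m4) * v 5 = 0 ∧
      (m1 - m3) * v 0 + (m4 - m1) * v 1 + (m3 - m4) * v 3 = 0 ∧
      (m3 - m4) * v 3 + (m2 - m3) * v 4 + (m4 - m2) * v 5 = 0 := by
  simp [balanceMatrix, funext_iff, Fin.forall_fin_succ, dotProduct, Fin.sum_univ_six]

theorem balanceMatrix_mulVec_balanceKernelBasis (i : Fin 3) :
    balanceMatrix m1 m2 m3 m4 *ᵥ balanceKernelBasis m1 m2 m3 m4 i = 0 := by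
  rw [balanceMatrix_mulVec_eq_zero_iff]
  fin_cases i <;>
    simp only [balanceKernelBasis, Fin.zero_eta, Fin.mk_one, Fin.reduceFinMk, cons_val',
      cons_val_zero, cons_val_one, cons_val, cons_val_fin_one] <;>
    exact ⟨by ring, by ring, by ring, by ring⟩

theorem range_balanceKernelBasis :
    Set.range (balanceKernelBasis m1 m2 m3 m4) =
      {![1, 1, 1, 1, 1, 1],
       ![m2 * m4, m2 * m3, m3 * m4, m1 * m2, m1 * m4, m1 * m3],
       ![m2 + m4, m2 + m3, m3 + m4, m1 + m2, m1 + m4, m1 + m3]} := by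
  rw [balanceKernelBasis, range_cons, range_cons, range_cons_empty, Set.singleton_union,
    Set.singleton_union]

end

section

variable {m1 m2 m3 m4 : ℝ}

theorem ker_balanceMatrix_of_path_1234 (h13 : m1 ≠ m3) (h14 : m1 ≠ m4) (h24 : m2 ≠ m4) :
    LinearMap.ker (balanceMatrix m1 m2 m3 m4).mulVecLin =
        span ℝ (Set.range (balanceKernelBasis m1 m2 m3 m4)) ∧
      LinearIndependent ℝ (balanceKernelBasis m1 m2 m3 m4) := by
  refine ker_mulVecLin_eq_span_of_det_ne_zero _ ![2, 4, 3]
    (balanceMatrix_mulVec_balanceKernelBasis m1 m2 m3 m4) ?_ fun v hv hv0 => ?_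
  · have hdet : (of fun i j => balanceKernelBasis m1 m2 m3 m4 i (![2, 4, 3] j)).det =
        -((m1 - m3) * (m1 - m4) * (m2 - m4)) := by
      simp only [det_fin_three, of_apply, balanceKernelBasis, cons_val', cons_val_fin_one,
        cons_val_zero, cons_val_one, cons_val]
      ring
    rw [hdet]
    exact neg_ne_zero.2 (mul_ne_zero (mul_ne_zero (sub_ne_zero.2 h13) (sub_ne_zero.2 h14))
      (sub_ne_zero.2 h24))
  · obtain ⟨e0, -, e2, e3⟩ := (balanceMatrix_mulVec_eq_zero_iff m1 m2 m3 m4 v).1 hv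
    have h2 : v 2 = 0 := hv0 0
    have h4 : v 4 = 0 := hv0 1
    have h3 : v 3 = 0 := hv0 2
    have h0 : v 0 = 0 := by simpa [h2, h4, sub_eq_zero, h13.symm] using e0
    have h1 : v 1 = 0 := by simpa [h0, h3, sub_eq_zero, h14.symm] using e2
    have h5 : v 5 = 0 := by simpa [h3, h4, sub_eq_zero, h24.symm] using e3
    ext j
    fin_cases j <;> assumption

theorem ker_balanceMatrix_of_path_1324 (h12 : m1 ≠ m2) (h14 : m1 ≠ m4) (h34 : m3 ≠ m4) :
    LinearMap.ker (balanceMatrix m1 m2 m3 m4).mulVecLin =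
        span ℝ (Set.range (balanceKernelBasis m1 m2 m3 m4)) ∧
      LinearIndependent ℝ (balanceKernelBasis m1 m2 m3 m4) := by
  refine ker_mulVecLin_eq_span_of_det_ne_zero _ ![0, 4, 5]
    (balanceMatrix_mulVec_balanceKernelBasis m1 m2 m3 m4) ?_ fun v hv hv0 => ?_
  · have hdet : (of fun i j => balanceKernelBasis m1 m2 m3 m4 i (![0, 4, 5] j)).det =
        -((m1 - m2) * (m1 - m4) * (m3 - m4)) := by
      simp only [det_fin_three, of_apply, balanceKernelBasis, cons_val', cons_val_fin_one,
        cons_val_zero, cons_val_one, cons_val]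
      ring
    rw [hdet]
    exact neg_ne_zero.2 (mul_ne_zero (mul_ne_zero (sub_ne_zero.2 h12) (sub_ne_zero.2 h14))
      (sub_ne_zero.2 h34))
  · obtain ⟨e0, e1, -, e3⟩ := (balanceMatrix_mulVec_eq_zero_iff m1 m2 m3 m4 v).1 hv
    have h0 : v 0 = 0 := hv0 0
    have h4 : v 4 = 0 := hv0 1
    have h5 : v 5 = 0 := hv0 2
    have h2 : v 2 = 0 := by simpa [h0, h4, sub_eq_zero, h12] using e0
    have h1 : v 1 = 0 := by simpa [h2, h5, sub_eq_zero, h14.symm] using e1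
    have h3 : v 3 = 0 := by simpa [h4, h5, sub_eq_zero, h34] using e3
    ext j
    fin_cases j <;> assumption

theorem ker_balanceMatrix_of_path_1423 (h12 : m1 ≠ m2) (h13 : m1 ≠ m3) (h34 : m3 ≠ m4) :
    LinearMap.ker (balanceMatrix m1 m2 m3 m4).mulVecLin =
        span ℝ (Set.range (balanceKernelBasis m1 m2 m3 m4)) ∧
      LinearIndependent ℝ (balanceKernelBasis m1 m2 m3 m4) := by
  refine ker_mulVecLin_eq_span_of_det_ne_zero _ ![1, 5, 4]
    (balanceMatrix_mulVec_balanceKernelBasis m1 m2 m3 m4) ?_ fun v hv hv0 => ?_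
  · have hdet : (of fun i j => balanceKernelBasis m1 m2 m3 m4 i (![1, 5, 4] j)).det =
        (m1 - m2) * (m1 - m3) * (m3 - m4) := by
      simp only [det_fin_three, of_apply, balanceKernelBasis, cons_val', cons_val_fin_one,
        cons_val_zero, cons_val_one, cons_val]
      ring
    rw [hdet]
    exact mul_ne_zero (mul_ne_zero (sub_ne_zero.2 h12) (sub_ne_zero.2 h13)) (sub_ne_zero.2 h34)
  · obtain ⟨e0, e1, -, e3⟩ := (balanceMatrix_mulVec_eq_zero_iff m1 m2 m3 m4 v).1 hv
    have h1 : v 1 = 0 := hv0 0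
    have h5 : v 5 = 0 := hv0 1
    have h4 : v 4 = 0 := hv0 2
    have h2 : v 2 = 0 := by simpa [h1, h5, sub_eq_zero, h12] using e1
    have h3 : v 3 = 0 := by simpa [h4, h5, sub_eq_zero, h34] using e3
    have h0 : v 0 = 0 := by simpa [h2, h4, sub_eq_zero, h13.symm] using e0
    ext j
    fin_cases j <;> assumption

theorem distinct_masses_cases
    (h : ¬((m1 = m2 ∧ m2 = m3) ∨ (m1 = m2 ∧ m2 = m4) ∨ (m1 = m3 ∧ m3 = m4) ∨
        (m2 = m3 ∧ m3 = m4))) :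
    (m1 ≠ m3 ∧ m1 ≠ m4 ∧ m2 ≠ m4) ∨ (m1 ≠ m2 ∧ m1 ≠ m4 ∧ m3 ≠ m4) ∨
      (m1 ≠ m2 ∧ m1 ≠ m3 ∧ m3 ≠ m4) := by
  grind

end

/-- When no three of the masses are equal, the kernel of the linearized
balanced-configuration matrix K is spanned by the three linearly independent
vectors E₁, E₂, E₃. -/
theorem kernel_linearized_balanced_equations (m1 m2 m3 m4 : ℝ)
    (h : ¬((m1 = m2 ∧ m2 = m3) ∨ (m1 = m2 ∧ m2 = m4) ∨ (m1 = m3 ∧ m3 = m4) ∨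
        (m2 = m3 ∧ m3 = m4))) :
    LinearMap.ker
        (Matrix.mulVecLin
          !![m3 - m1, 0, m1 - m2, 0, m2 - m3, 0;
             0, m4 - m1, m1 - m2, 0, 0, m2 - m4;
             m1 - m3, m4 - m1, 0, m3 - m4, 0, 0;
             0, 0, 0, m3 - m4, m2 - m3, m4 - m2])
      = Submodule.span ℝ
          {![1, 1, 1, 1, 1, 1],
           ![m2 * m4, m2 * m3, m3 * m4, m1 * m2, m1 * m4, m1 * m3],
           ![m2 + m4, m2 + m3, m3 + m4, m1 + m2, m1 + m4, m1 + m3]} ∧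
    LinearIndependent ℝ
      ![(![1, 1, 1, 1, 1, 1] : Fin 6 → ℝ),
        ![m2 * m4, m2 * m3, m3 * m4, m1 * m2, m1 * m4, m1 * m3],
        ![m2 + m4, m2 + m3, m3 + m4, m1 + m2, m1 + m4, m1 + m3]] := by
  rw [← range_balanceKernelBasis]
  rcases distinct_masses_cases h with ⟨h13, h14, h24⟩ | ⟨h12, h14, h34⟩ | ⟨h12, h13, h34⟩
  · exact ker_balanceMatrix_of_path_1234 h13 h14 h24
  · exact ker_balanceMatrix_of_path_1324 h12 h14 h34
  · exact ker_balanceMatrix_of_path_1423 h12 h13 h34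
end

section
/- Let m1, m2, m3, m4 be positive real numbers and E(x) = (m1+m2+m3+m4)x³ + 2(m1m2+m1m3+m1m4+m2m3+m2m4+m3m4)x² + 3(m1m2m3+m1m2m4+m1m3m4+m2m3m4)x + 4m1m2m3m4. Then E has three real roots, all strictly negative: there exist real numbers r₁, r₂, r₃ < 0 such that E(x) = (m1+m2+m3+m4)(x−r₁)(x−r₂)(x−r₃) for all x. -/
/-!
With `H(y) = ∏ᵢ (1 + mᵢ y)` one has `E(x) = x³ H'(1/x)`. The quartic `H` has the four real
roots `-1/mᵢ`, so by Rolle's theorem (counted with multiplicity) its derivative, a cubic with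
positive coefficients, has three real roots, necessarily negative. The roots of `E` are their
reciprocals.
-/

open Polynomial

theorem Polynomial.Splits.derivative {p : ℝ[X]} (hp : p.Splits) : p.derivative.Splits := by
  rw [splits_iff_card_roots] at hp ⊢
  have := card_roots_le_derivative p
  have := card_roots' p.derivative
  have := natDegree_derivative_le p
  omega

namespace Cubic

variable {F : Type*} [Field F]

theorem map_id (P : Cubic F) : map (RingHom.id F) P = P := rfl

theorem neg_of_mem_roots [LinearOrder F] [IsStrictOrderedRing F] {P : Cubic F} (ha : 0 < P.a)
    (hb : 0 < P.b) (hc : 0 < P.c) (hd : 0 < P.d) {s : F} (hs : s ∈ P.roots) : s < 0 := by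
  rw [mem_roots_iff (ne_zero_of_a_ne_zero ha.ne')] at hs
  by_contra! h
  have : 0 < P.a * s ^ 3 + P.b * s ^ 2 + P.c * s + P.d := by positivity
  exact this.ne' hs

theorem reverse_eq_prod_inv_roots {P : Cubic F} {s1 s2 s3 : F} (ha : P.a ≠ 0) (hd : P.d ≠ 0)
    (hroots : P.roots = {s1, s2, s3}) (x : F) :
    P.d * x ^ 3 + P.c * x ^ 2 + P.b * x + P.a =
      P.d * (x - s1⁻¹) * (x - s2⁻¹) * (x - s3⁻¹) := by
  have hvieta := eq_sum_three_roots (φ := RingHom.id F) ha hroots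
  rw [map_id] at hvieta
  obtain ⟨a, b, c, d⟩ := P
  simp only [RingHom.id_apply, mk.injEq] at hvieta hd ha ⊢
  obtain ⟨-, rfl, rfl, rfl⟩ := hvieta
  have h1 : s1 ≠ 0 := by rintro rfl; simp at hd
  have h2 : s2 ≠ 0 := by rintro rfl; simp at hd
  have h3 : s3 ≠ 0 := by rintro rfl; simp at hd
  field_simp
  ring

end Cubic

theorem derivative_prod_C_mul_X_add_one (m1 m2 m3 m4 : ℝ) :
    derivative ((C m1 * X + 1) * (C m2 * X + 1) * (C m3 * X + 1) * (C m4 * X + 1)) =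
      (⟨4 * (m1 * m2 * m3 * m4), 3 * (m1 * m2 * m3 + m1 * m2 * m4 + m1 * m3 * m4 + m2 * m3 * m4),
        2 * (m1 * m2 + m1 * m3 + m1 * m4 + m2 * m3 + m2 * m4 + m3 * m4),
        m1 + m2 + m3 + m4⟩ : Cubic ℝ).toPoly := by
  simp only [Cubic.toPoly, derivative_mul, derivative_C, derivative_X, derivative_one, map_add,
    map_mul, map_ofNat]
  ring

/-- The cubic E has three real roots, all strictly negative. -/
theorem E_has_three_negative_roots (m1 m2 m3 m4 : ℝ)
    (h1 : 0 < m1) (h2 : 0 < m2) (h3 : 0 < m3) (h4 : 0 < m4) :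
    ∃ r1 r2 r3 : ℝ, r1 < 0 ∧ r2 < 0 ∧ r3 < 0 ∧
      ∀ x : ℝ,
        (m1 + m2 + m3 + m4) * x ^ 3
          + 2 * (m1 * m2 + m1 * m3 + m1 * m4 + m2 * m3 + m2 * m4 + m3 * m4) * x ^ 2
          + 3 * (m1 * m2 * m3 + m1 * m2 * m4 + m1 * m3 * m4 + m2 * m3 * m4) * x
          + 4 * (m1 * m2 * m3 * m4)
        = (m1 + m2 + m3 + m4) * (x - r1) * (x - r2) * (x - r3) := by
  set P : Cubic ℝ := ⟨4 * (m1 * m2 * m3 * m4),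
    3 * (m1 * m2 * m3 + m1 * m2 * m4 + m1 * m3 * m4 + m2 * m3 * m4),
    2 * (m1 * m2 + m1 * m3 + m1 * m4 + m2 * m3 + m2 * m4 + m3 * m4), m1 + m2 + m3 + m4⟩ with hP
  have ha : 0 < P.a := by positivity
  have hsplit : (P.toPoly.map (RingHom.id ℝ)).Splits := by
    rw [Polynomial.map_id, hP, ← derivative_prod_C_mul_X_add_one]
    refine Splits.derivative (.mul (.mul (.mul ?_ ?_) ?_) ?_) <;>
      exact Splits.of_natDegree_le_one (by compute_degree!)
  obtain ⟨s1, s2, s3, hroots⟩ := (Cubic.splits_iff_roots_eq_three ha.ne').1 hsplit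
  rw [Cubic.map_id] at hroots
  have hneg {s : ℝ} (hs : s ∈ ({s1, s2, s3} : Multiset ℝ)) : s⁻¹ < 0 :=
    inv_lt_zero.2 <| Cubic.neg_of_mem_roots ha (by positivity) (by positivity) (by positivity)
      (hroots ▸ hs)
  exact ⟨s1⁻¹, s2⁻¹, s3⁻¹, hneg (by simp), hneg (by simp), hneg (by simp),
    Cubic.reverse_eq_prod_inv_roots ha.ne' (by positivity) hroots⟩
end

section
/- Let m1, m2, m3 be real numbers and let φ: ℝ → ℝ be differentiable at 1. Define G(a, b, d, f) = m1(d−b−a)(φ(b)−φ(a)) − m2(d+b)(φ(d)−φ(f)) + m3(b−a−d)(φ(a)−φ(d)) − m2(b+d)(φ(f)−φ(b)) + m2(a−d−b)(φ(d)−φ(b)) − m2(a+f)(φ(b)−φ(d)). Then (i) G(l, l, l, l) = 0 for every real l, and (ii) the gradient of G at the point (1, 1, 1, 1) equals φ′(1)·(m1−m3, m2−m1, m3−m2, 0). In particular, if φ′(1) ≠ 0 and the three numbers m1, m2, m3 are not all equal, then G is a submersion at (1, 1, 1, 1). -/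
/-!
Each of the six terms of `G` has the form `c · (φ u − φ v)` with `u = v` on the diagonal, so at
`(1,1,1,1)` the product rule leaves only `c(1,1,1,1) · φ'(1) · (du − dv)`; summing gives the stated
gradient. A nonzero linear functional to `ℝ` is surjective, and this one is nonzero because
`m2 − m1` or `m3 − m2` is.
-/

theorem HasFDerivAt.mul_sub_comp_of_eq {𝕜 E : Type*} [NontriviallyNormedField 𝕜]
    [NormedAddCommGroup E] [NormedSpace 𝕜 E] {c u v : E → 𝕜} {c' u' v' : E →L[𝕜] 𝕜}
    {φ : 𝕜 → 𝕜} {φ' : 𝕜} {x : E} (hc : HasFDerivAt c c' x) (hu : HasFDerivAt u u' x)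
    (hv : HasFDerivAt v v' x) (huv : u x = v x) (hφ : HasDerivAt φ φ' (u x)) :
    HasFDerivAt (fun y => c y * (φ (u y) - φ (v y))) ((c x * φ') • (u' - v')) x := by
  have hφv : HasDerivAt φ φ' (v x) := huv ▸ hφ
  refine (hc.mul ((hφ.comp_hasFDerivAt x hu).sub (hφv.comp_hasFDerivAt x hv))).congr_fderiv ?_
  ext w
  simp only [Pi.sub_apply, Function.comp_apply, huv, sub_self, add_apply, smul_apply, sub_apply,
    smul_eq_mul, zero_mul, add_zero]
  ring

theorem LinearMap.surjective_of_apply_ne_zero {K V : Type*} [Field K] [AddCommGroup V]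
    [Module K V] (f : V →ₗ[K] K) {v : V} (hv : f v ≠ 0) : Function.Surjective f :=
  fun x => ⟨(x / f v) • v, by simp [hv]⟩

/-- The single equation G = 0 of Z/2Z-symmetric balanced configurations vanishes on
the diagonal, and its gradient at the regular tetrahedron (1,1,1,1) is
φ′(1)·(m1−m3, m2−m1, m3−m2, 0); in particular G is a submersion there as soon as
φ′(1) ≠ 0 and m1, m2, m3 are not all equal. -/
theorem symmetric_balanced_equation_submersion
    (m1 m2 m3 : ℝ) (φ : ℝ → ℝ) (φ' : ℝ) (hφ : HasDerivAt φ φ' 1) :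
    let G : ℝ → ℝ → ℝ → ℝ → ℝ := fun a b d f =>
      m1 * (d - b - a) * (φ b - φ a) - m2 * (d + b) * (φ d - φ f)
        + m3 * (b - a - d) * (φ a - φ d) - m2 * (b + d) * (φ f - φ b)
        + m2 * (a - d - b) * (φ d - φ b) - m2 * (a + f) * (φ b - φ d)
    let pa : ℝ × ℝ × ℝ × ℝ →L[ℝ] ℝ := ContinuousLinearMap.fst ℝ ℝ (ℝ × ℝ × ℝ)
    let pb : ℝ × ℝ × ℝ × ℝ →L[ℝ] ℝ :=
      (ContinuousLinearMap.fst ℝ ℝ (ℝ × ℝ)).comp (ContinuousLinearMap.snd ℝ ℝ (ℝ × ℝ × ℝ))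
    let pd : ℝ × ℝ × ℝ × ℝ →L[ℝ] ℝ :=
      (ContinuousLinearMap.fst ℝ ℝ ℝ).comp
        ((ContinuousLinearMap.snd ℝ ℝ (ℝ × ℝ)).comp (ContinuousLinearMap.snd ℝ ℝ (ℝ × ℝ × ℝ)))
    let pf : ℝ × ℝ × ℝ × ℝ →L[ℝ] ℝ :=
      (ContinuousLinearMap.snd ℝ ℝ ℝ).comp
        ((ContinuousLinearMap.snd ℝ ℝ (ℝ × ℝ)).comp (ContinuousLinearMap.snd ℝ ℝ (ℝ × ℝ × ℝ)))
    let L : ℝ × ℝ × ℝ × ℝ →L[ℝ] ℝ :=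
      (φ' * (m1 - m3)) • pa + (φ' * (m2 - m1)) • pb + (φ' * (m3 - m2)) • pd + (φ' * 0) • pf
    (∀ l : ℝ, G l l l l = 0) ∧
    HasFDerivAt (fun p : ℝ × ℝ × ℝ × ℝ => G p.1 p.2.1 p.2.2.1 p.2.2.2) L (1, 1, 1, 1) ∧
    (φ' ≠ 0 → ¬(m1 = m2 ∧ m2 = m3) → Function.Surjective ⇑L) := by
  intro G pa pb pd pf L
  have ha : HasFDerivAt (fun p : ℝ × ℝ × ℝ × ℝ => p.1) pa (1, 1, 1, 1) := pa.hasFDerivAt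
  have hb : HasFDerivAt (fun p : ℝ × ℝ × ℝ × ℝ => p.2.1) pb (1, 1, 1, 1) := pb.hasFDerivAt
  have hd : HasFDerivAt (fun p : ℝ × ℝ × ℝ × ℝ => p.2.2.1) pd (1, 1, 1, 1) := pd.hasFDerivAt
  have hf : HasFDerivAt (fun p : ℝ × ℝ × ℝ × ℝ => p.2.2.2) pf (1, 1, 1, 1) := pf.hasFDerivAt
  refine ⟨fun l => by simp [G], ?_, fun hφ' hm => ?_⟩
  · have h₁ := (((hd.sub hb).sub ha).const_mul m1).mul_sub_comp_of_eq hb ha rfl hφ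
    have h₂ := ((hd.add hb).const_mul m2).mul_sub_comp_of_eq hd hf rfl hφ
    have h₃ := (((hb.sub ha).sub hd).const_mul m3).mul_sub_comp_of_eq ha hd rfl hφ
    have h₄ := ((hb.add hd).const_mul m2).mul_sub_comp_of_eq hf hb rfl hφ
    have h₅ := (((ha.sub hd).sub hb).const_mul m2).mul_sub_comp_of_eq hd hb rfl hφ
    have h₆ := ((ha.add hf).const_mul m2).mul_sub_comp_of_eq hb hd rfl hφ
    have hG := ((((h₁.sub h₂).add h₃).sub h₄).add h₅).sub h₆
    refine hG.congr_fderiv (ContinuousLinearMap.ext fun w => ?_)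
    simp only [Pi.sub_apply, sub_self, zero_sub, mul_neg, mul_one, neg_mul, neg_smul, Pi.add_apply,
      sub_apply, add_apply, neg_apply, smul_apply, ContinuousLinearMap.comp_apply,
      ContinuousLinearMap.coe_snd', ContinuousLinearMap.coe_fst', smul_eq_mul, mul_zero, zero_smul,
      add_zero, pb, pa, pd, pf, L]
    ring
  · obtain ⟨v, hv⟩ : ∃ v, L v ≠ 0 := by
      by_cases h12 : m1 = m2
      · have h23 : m3 - m2 ≠ 0 := sub_ne_zero.mpr fun h => hm ⟨h12, h.symm⟩
        exact ⟨(0, 0, 1, 0), by simpa [L, pa, pb, pd, pf] using mul_ne_zero hφ' h23⟩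
      · have h21 : m2 - m1 ≠ 0 := sub_ne_zero.mpr (Ne.symm h12)
        exact ⟨(0, 1, 0, 0), by simpa [L, pa, pb, pd, pf] using mul_ne_zero hφ' h21⟩
    exact LinearMap.surjective_of_apply_ne_zero (L : ℝ × ℝ × ℝ × ℝ →ₗ[ℝ] ℝ) hv
end
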